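/- arXiv:2305.18849 — 5 statements merged into one kernel-verified Lean document; each statement's English description precedes it below -/
import Mathlib

section
/- Let M ≥ 2 be a squarefree odd integer such that −1 is a global norm from K = ℚ(√M). Then the fundamental unit ε_K has norm N(ε_K) = −1 if and only if m = 1 and m' = 1. -/
open NumberField

/-- The real quadratic field `K = ℚ(√M)`, realized inside `ℝ`. -/
noncomputable def Ksqrt (M : ℕ) : IntermediateField ℚ ℝ :=
  IntermediateField.adjoin ℚ {Real.sqrt M}

/-- `ε` is the fundamental unit of `ℚ(√M)`: `ε > 1` and `ε` is minimal among units `> 1`. -/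
def IsFundamentalUnit (M : ℕ) (ε : (𝓞 (Ksqrt M))ˣ) : Prop :=
  1 < (((ε : 𝓞 (Ksqrt M)) : Ksqrt M) : ℝ) ∧
    ∀ u : (𝓞 (Ksqrt M))ˣ, 1 < (((u : 𝓞 (Ksqrt M)) : Ksqrt M) : ℝ) →
      (((ε : 𝓞 (Ksqrt M)) : Ksqrt M) : ℝ) ≤ (((u : 𝓞 (Ksqrt M)) : Ksqrt M) : ℝ)

/-- With `ε_K = (u + v√M)/2` and `g = gcd(u+2, v)`, this is `m = gcd((u+2)/g, M)`,
the gcd of `A` and `M` where `ε_K + 1 = g(A + B√M)`. -/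
def gcdm (M : ℕ) (u v : ℤ) : ℕ := Int.gcd ((u + 2) / (Int.gcd (u + 2) v : ℤ)) (M : ℤ)

/-- With `ε_K = (u + v√M)/2` and `g' = gcd(u-2, v)`, this is `m' = gcd((u-2)/g', M)`,
the gcd of `A'` and `M` where `ε_K - 1 = g'(A' + B'√M)`. -/
def gcdm' (M : ℕ) (u v : ℤ) : ℕ := Int.gcd ((u - 2) / (Int.gcd (u - 2) v : ℤ)) (M : ℤ)

/-!
Write `ε = (u + v√M)/2`, so that `N(ε) = (u² - Mv²)/4 = ±1`. Clearing denominators in a rational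
solution of `a² - Mb² = -1` gives `r² + q² = Ms²` with `q ≠ 0`, which a 2-adic descent rules out
for `M ≡ 3 mod 4`; hence `M ≡ 1 mod 4`.

If `u² - Mv² = -4`, then `(u + 2)(u - 2) = Mv² - 8` is prime to the odd number `M`, so `m = m' = 1`.
Conversely, if `u² - Mv² = 4` and `m = 1`, write `u + 2 = gA`, `v = gB`. Then
`g(A² - MB²) = 4A`, and as `A` is prime to `MB²` we get `g = kA` with `k(A² - MB²) = 4`; `k = 2` is
impossible modulo 4, so `k ∈ {1, 4}` and `ε = ((a + b√M)/2)²` with `a² - Mb² = 4`. A square root of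
`ε` in `K` is integral, hence `±` it is a unit in `(1, ε)`, contradicting minimality.
-/

namespace Int

lemma two_dvd_of_sq_add_sq_eq_mul_sq {M r q s : ℤ} (hM : M % 4 = 3)
    (h : r ^ 2 + q ^ 2 = M * s ^ 2) : 2 ∣ r ∧ 2 ∣ q ∧ 2 ∣ s := by
  have mod_four : ∀ r q s : ZMod 4, r ^ 2 + q ^ 2 = 3 * s ^ 2 →
      2 * r = 0 ∧ 2 * q = 0 ∧ 2 * s = 0 := by
    decide
  have two_dvd {x : ℤ} (hx : 2 * (x : ZMod 4) = 0) : 2 ∣ x := by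
    have : (4 : ℤ) ∣ 2 * x := (ZMod.intCast_zmod_eq_zero_iff_dvd _ 4).mp (by push_cast; exact hx)
    omega
  have hM' : (M : ZMod 4) = 3 := by rw [← ZMod.intCast_mod]; norm_num [hM]
  have h4 := congrArg (fun x : ℤ => (x : ZMod 4)) h
  push_cast [hM'] at h4
  obtain ⟨hr, hq, hs⟩ := mod_four _ _ _ h4
  exact ⟨two_dvd hr, two_dvd hq, two_dvd hs⟩

lemma eq_zero_of_sq_add_sq_eq_mul_sq {M r q s : ℤ} (hM : M % 4 = 3)
    (h : r ^ 2 + q ^ 2 = M * s ^ 2) : q = 0 := by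
  induction hn : q.natAbs using Nat.strong_induction_on generalizing r q s with
  | _ n ih =>
  obtain ⟨⟨r, rfl⟩, ⟨q, rfl⟩, ⟨s, rfl⟩⟩ := two_dvd_of_sq_add_sq_eq_mul_sq hM h
  suffices q = 0 by rw [this, mul_zero]
  by_contra hq
  refine hq (ih q.natAbs ?_ (r := r) (s := s) (by linarith) rfl)
  rw [← hn, natAbs_mul]
  have := natAbs_pos.mpr hq
  norm_num
  omega

lemma mod_four_eq_one_of_sq_sub_mul_sq_eq_neg_one {M : ℤ} (hM : Odd M) {a b : ℚ}
    (h : a ^ 2 - M * b ^ 2 = -1) : M % 4 = 1 := by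
  have hM' : M % 4 = 1 ∨ M % 4 = 3 := by rcases hM with ⟨k, rfl⟩; omega
  refine hM'.resolve_right fun hM3 => ?_
  have key : (a.num * b.den) ^ 2 + ((a.den : ℤ) * b.den) ^ 2 = M * (b.num * a.den) ^ 2 := by
    have : (a.num * b.den : ℚ) ^ 2 + ((a.den : ℚ) * b.den) ^ 2 = M * (b.num * a.den) ^ 2 := by
      rw [← Rat.mul_den_eq_num a, ← Rat.mul_den_eq_num b]
      linear_combination ((a.den : ℚ) ^ 2 * b.den ^ 2) * h
    exact_mod_cast this
  simpa using eq_zero_of_sq_add_sq_eq_mul_sq hM3 key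

lemma isCoprime_mul_of_sq_sub_mul_sq_eq_neg_four {M u v : ℤ} (hM : Odd M)
    (h : u ^ 2 - M * v ^ 2 = -4) : IsCoprime ((u + 2) * (u - 2)) M := by
  have : (u + 2) * (u - 2) = -2 ^ 3 + M * v ^ 2 := by linear_combination h
  rw [this, IsCoprime.add_mul_left_left_iff]
  exact (isCoprime_two_left.mpr hM).pow_left.neg_left

lemma gcd_ediv_gcd_eq_one_of_isCoprime {w v M : ℤ} (h : IsCoprime w M) :
    gcd (w / gcd w v) M = 1 := by
  rw [← isCoprime_iff_gcd_eq_one]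
  rw [← Int.mul_ediv_cancel' (gcd_dvd_left w v)] at h
  exact h.of_mul_left_right

lemma sq_sub_mul_sq_ne_two {M : ℤ} (hM : M % 4 = 1) (x y : ℤ) : x ^ 2 - M * y ^ 2 ≠ 2 := by
  have mod_four : ∀ x y : ZMod 4, x ^ 2 - y ^ 2 ≠ 2 := by decide
  have hM' : (M : ZMod 4) = 1 := by rw [← ZMod.intCast_mod]; norm_num [hM]
  intro h
  apply mod_four x y
  simpa [hM'] using congrArg (fun t : ℤ => (t : ZMod 4)) h

lemma exists_eq_mul_of_mul_sq_sub_mul_sq_eq {M g A B : ℤ} (hg : 0 < g) (hA : 0 < A)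
    (hAB : IsCoprime A B) (hAM : IsCoprime A M) (h : g * (A ^ 2 - M * B ^ 2) = 4 * A) :
    ∃ k, 0 < k ∧ g = A * k ∧ k * (A ^ 2 - M * B ^ 2) = 4 := by
  have hdvd : A ∣ g * (M * B ^ 2) := ⟨g * A - 4, by linear_combination -h⟩
  obtain ⟨k, rfl⟩ := (hAM.mul_right hAB.pow_right).dvd_of_dvd_mul_right hdvd
  refine ⟨k, pos_of_mul_pos_right hg hA.le, rfl, ?_⟩
  exact mul_left_cancel₀ hA.ne' (by linear_combination h)

lemma exists_sq_of_sq_sub_mul_sq_eq_four {M u v : ℤ} (hM : M % 4 = 1) (hu : 0 < u)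
    (h : u ^ 2 - M * v ^ 2 = 4) (hm : gcd ((u + 2) / (gcd (u + 2) v : ℤ)) M = 1) :
    ∃ a b : ℤ, a ^ 2 - M * b ^ 2 = 4 ∧ u = a ^ 2 - 2 ∧ v = a * b := by
  set g : ℤ := (gcd (u + 2) v : ℤ)
  have hg : 0 < g := by simp only [g, Nat.cast_pos, gcd_pos_iff]; omega
  set A := (u + 2) / g
  set B := v / g
  have hgA : g * A = u + 2 := Int.mul_ediv_cancel' (gcd_dvd_left _ _)
  have hgB : g * B = v := Int.mul_ediv_cancel' (gcd_dvd_right _ _)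
  have hA : 0 < A := pos_of_mul_pos_right (by omega : 0 < g * A) hg.le
  have hAB : IsCoprime A B := isCoprime_iff_gcd_eq_one.mpr (gcd_div_gcd_div_gcd (by omega))
  have hmain : g * (A ^ 2 - M * B ^ 2) = 4 * A := by
    refine mul_left_cancel₀ hg.ne' ?_
    linear_combination h + (g * A + u + 2 - 4) * hgA - M * (g * B + v) * hgB
  obtain ⟨k, hk, hgk, hk4⟩ :=
    exists_eq_mul_of_mul_sq_sub_mul_sq_eq hg hA hAB (isCoprime_iff_gcd_eq_one.mpr hm) hmain
  have : k ≤ 4 := le_of_dvd four_pos ⟨_, hk4.symm⟩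
  interval_cases k
  · refine ⟨A, B, by linarith, ?_, ?_⟩
    · linear_combination A * hgk - hgA
    · linear_combination B * hgk - hgB
  · exact absurd (by linarith) (sq_sub_mul_sq_ne_two hM A B)
  · omega
  · refine ⟨2 * A, 2 * B, by linear_combination hk4, ?_, ?_⟩
    · linear_combination A * hgk - hgA
    · linear_combination B * hgk - hgB

end Int

lemma Nat.not_isSquare_of_squarefree {M : ℕ} (hsf : Squarefree M) (hM : 2 ≤ M) :
    ¬ IsSquare M := by
  rintro ⟨r, rfl⟩
  obtain rfl : r = 1 := Nat.isUnit_iff.mp (hsf r dvd_rfl)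
  omega

namespace Ksqrt

open Polynomial

variable {M : ℕ}

noncomputable def sqrt (M : ℕ) : Ksqrt M :=
  ⟨√M, IntermediateField.subset_adjoin ℚ _ rfl⟩

lemma sqrt_sq : sqrt M ^ 2 = M :=
  Subtype.ext (by push_cast; exact Real.sq_sqrt (Nat.cast_nonneg M))

lemma coe_add_mul_sqrt (a b : ℚ) :
    (((a : Ksqrt M) + b * sqrt M : Ksqrt M) : ℝ) = a + b * √M := by
  push_cast
  rfl

lemma aeval_sqrt : aeval (√M : ℝ) (X ^ 2 - C (M : ℚ)) = 0 := by
  simp [Real.sq_sqrt (Nat.cast_nonneg (α := ℝ) M)]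

lemma isIntegral_sqrt : IsIntegral ℚ (√M : ℝ) :=
  ⟨X ^ 2 - C (M : ℚ), monic_X_pow_sub_C _ two_ne_zero, aeval_sqrt⟩

instance : NumberField (Ksqrt M) where
  to_finiteDimensional := IntermediateField.adjoin.finiteDimensional isIntegral_sqrt

lemma norm_eq_one_or_neg_one (ε : (𝓞 (Ksqrt M))ˣ) :
    Algebra.norm ℚ ((ε : 𝓞 (Ksqrt M)) : Ksqrt M) = 1 ∨
      Algebra.norm ℚ ((ε : 𝓞 (Ksqrt M)) : Ksqrt M) = -1 :=
  (abs_eq zero_le_one).mp (NumberField.Units.norm _ ε)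

lemma natDegree_minpoly_sqrt (hM : ¬ IsSquare M) : (minpoly ℚ (√M : ℝ)).natDegree = 2 := by
  refine le_antisymm ?_ ?_
  · calc _ ≤ (X ^ 2 - C (M : ℚ)).natDegree :=
          natDegree_le_of_dvd (minpoly.dvd _ _ aeval_sqrt)
            (monic_X_pow_sub_C _ two_ne_zero).ne_zero
      _ = 2 := natDegree_X_pow_sub_C
  · rw [minpoly.two_le_natDegree_iff isIntegral_sqrt]
    rintro ⟨q, hq⟩
    exact irrational_sqrt_natCast_iff.mpr hM ⟨q, hq⟩

noncomputable def powerBasis (M : ℕ) : PowerBasis ℚ (Ksqrt M) :=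
  IntermediateField.adjoin.powerBasis isIntegral_sqrt

lemma powerBasis_dim (hM : ¬ IsSquare M) : (powerBasis M).dim = 2 :=
  natDegree_minpoly_sqrt hM

noncomputable def basis (hM : ¬ IsSquare M) : Module.Basis (Fin 2) ℚ (Ksqrt M) :=
  (powerBasis M).basis.reindex (finCongr (powerBasis_dim hM))

lemma basis_zero (hM : ¬ IsSquare M) : basis hM 0 = 1 := by
  rw [basis, Module.Basis.reindex_apply, PowerBasis.coe_basis]
  simp

lemma basis_one (hM : ¬ IsSquare M) : basis hM 1 = sqrt M := by
  rw [basis, Module.Basis.reindex_apply, PowerBasis.coe_basis]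
  simp
  rfl

lemma sum_basis (hM : ¬ IsSquare M) (c : Fin 2 → ℚ) :
    ∑ i, c i • basis hM i = c 0 + c 1 * sqrt M := by
  simp [Fin.sum_univ_two, basis_zero, basis_one, Rat.smul_def]

lemma repr_add_mul_sqrt (hM : ¬ IsSquare M) (a b : ℚ) :
    ⇑((basis hM).repr (a + b * sqrt M)) = ![a, b] := by
  have h := sum_basis hM ![a, b]
  simp only [Matrix.cons_val_zero, Matrix.cons_val_one] at h
  rw [← h, (basis hM).repr_sum_self]

lemma exists_eq_add_mul_sqrt (hM : ¬ IsSquare M) (x : Ksqrt M) :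
    ∃ a b : ℚ, x = a + b * sqrt M :=
  ⟨(basis hM).repr x 0, (basis hM).repr x 1, by rw [← sum_basis hM, (basis hM).sum_repr]⟩

lemma norm_add_mul_sqrt (hM : ¬ IsSquare M) (a b : ℚ) :
    Algebra.norm ℚ ((a : Ksqrt M) + b * sqrt M) = a ^ 2 - M * b ^ 2 := by
  have hmul : ((a : Ksqrt M) + b * sqrt M) * sqrt M = (b * M : ℚ) + a * sqrt M := by
    push_cast
    linear_combination (b : Ksqrt M) * sqrt_sq
  rw [Algebra.norm_eq_matrix_det (basis hM), Matrix.det_fin_two]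
  simp only [Algebra.leftMulMatrix_eq_repr_mul, basis_zero, basis_one, mul_one, hmul,
    repr_add_mul_sqrt]
  simp
  ring

lemma four_mul_norm_of_coe_eq (hM : ¬ IsSquare M) {x : Ksqrt M} {u v : ℤ}
    (h : (x : ℝ) = (u + v * √M) / 2) : 4 * Algebra.norm ℚ x = ((u ^ 2 - M * v ^ 2 : ℤ) : ℚ) := by
  have hx : x = ((u / 2 : ℚ) : Ksqrt M) + (v / 2 : ℚ) * sqrt M :=
    Subtype.ext (by rw [coe_add_mul_sqrt, h]; push_cast; ring)
  rw [hx, norm_add_mul_sqrt hM]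
  push_cast
  ring

lemma mod_four_eq_one_of_norm_eq_neg_one (hM : ¬ IsSquare M) (hModd : Odd M) {x : Ksqrt M}
    (hx : Algebra.norm ℚ x = -1) : (M : ℤ) % 4 = 1 := by
  obtain ⟨a, b, rfl⟩ := exists_eq_add_mul_sqrt hM x
  rw [norm_add_mul_sqrt hM] at hx
  exact Int.mod_four_eq_one_of_sq_sub_mul_sq_eq_neg_one (by exact_mod_cast hModd)
    (by exact_mod_cast hx)

lemma coe_half_add_mul_sqrt_sq {a b : ℤ} (hab : a ^ 2 - M * b ^ 2 = 4) :
    ((((a / 2 : ℚ) : Ksqrt M) + (b / 2 : ℚ) * sqrt M : Ksqrt M) : ℝ) ^ 2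
      = ((a ^ 2 - 2 : ℤ) + (a * b : ℤ) * √M) / 2 := by
  have hab' : (a : ℝ) ^ 2 - M * b ^ 2 = 4 := by exact_mod_cast hab
  rw [coe_add_mul_sqrt]
  push_cast
  linear_combination (b ^ 2 / 4 : ℝ) * Real.sq_sqrt (Nat.cast_nonneg (α := ℝ) M) - hab' / 4

end Ksqrt

lemma IsFundamentalUnit.ne_sq {M : ℕ} {ε : (𝓞 (Ksqrt M))ˣ} (hε : IsFundamentalUnit M ε)
    (x : Ksqrt M) : (((ε : 𝓞 (Ksqrt M)) : Ksqrt M) : ℝ) ≠ (x : ℝ) ^ 2 := by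
  intro hx
  have hεx : ((ε : 𝓞 (Ksqrt M)) : Ksqrt M) = x ^ 2 := Subtype.ext (by push_cast; exact hx)
  have hint : IsIntegral ℤ x :=
    IsIntegral.of_pow two_pos (hεx ▸ RingOfIntegers.isIntegral_coe _)
  have hy : IsUnit (⟨x, hint⟩ : 𝓞 (Ksqrt M)) := by
    have : (⟨x, hint⟩ : 𝓞 (Ksqrt M)) ^ 2 = (ε : 𝓞 (Ksqrt M)) := RingOfIntegers.ext hεx.symm
    exact (isUnit_pow_iff two_ne_zero).mp (this ▸ ε.isUnit)
  obtain ⟨η, hη⟩ : ∃ η : (𝓞 (Ksqrt M))ˣ, (((η : 𝓞 (Ksqrt M)) : Ksqrt M) : ℝ) = |(x : ℝ)| := by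
    rcases abs_choice (x : ℝ) with h | h
    · exact ⟨hy.unit, h.symm⟩
    · exact ⟨-hy.unit, by rw [h]; rfl⟩
  have hη1 : 1 < |(x : ℝ)| := one_lt_sq_iff_one_lt_abs _ |>.mp (hx ▸ hε.1)
  have hεη := hε.2 η (hη ▸ hη1)
  rw [hη, hx, ← sq_abs] at hεη
  nlinarith

theorem stmt_0_general (M : ℕ) (hM : 2 ≤ M) (hsf : Squarefree M)
    (hglob : ∃ x : Ksqrt M, Algebra.norm ℚ x = -1)
    (ε : (𝓞 (Ksqrt M))ˣ) (hε : IsFundamentalUnit M ε)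
    (u v : ℤ) (hu : 0 < u)
    (huv : (((ε : 𝓞 (Ksqrt M)) : Ksqrt M) : ℝ) = (u + v * Real.sqrt M) / 2) (hModd : Odd M) :
    Algebra.norm ℚ ((ε : 𝓞 (Ksqrt M)) : Ksqrt M) = -1 ↔
      gcdm M u v = 1 ∧ gcdm' M u v = 1 := by
  have hsq := Nat.not_isSquare_of_squarefree hsf hM
  have hnorm := Ksqrt.four_mul_norm_of_coe_eq hsq huv
  constructor
  · intro hneg
    have hpell : u ^ 2 - M * v ^ 2 = -4 := by
      exact_mod_cast (by rw [← hnorm, hneg]; norm_num : ((u ^ 2 - M * v ^ 2 : ℤ) : ℚ) = -4)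
    have hcop := Int.isCoprime_mul_of_sq_sub_mul_sq_eq_neg_four (by exact_mod_cast hModd) hpell
    exact ⟨Int.gcd_ediv_gcd_eq_one_of_isCoprime hcop.of_mul_left_left,
      Int.gcd_ediv_gcd_eq_one_of_isCoprime hcop.of_mul_left_right⟩
  · rintro ⟨hm, -⟩
    obtain ⟨x, hx⟩ := hglob
    have hM4 := Ksqrt.mod_four_eq_one_of_norm_eq_neg_one hsq hModd hx
    refine (Ksqrt.norm_eq_one_or_neg_one ε).resolve_left fun hone => ?_
    have hpell : u ^ 2 - M * v ^ 2 = 4 := by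
      exact_mod_cast (by rw [← hnorm, hone]; norm_num : ((u ^ 2 - M * v ^ 2 : ℤ) : ℚ) = 4)
    obtain ⟨a, b, hab, rfl, rfl⟩ := Int.exists_sq_of_sq_sub_mul_sq_eq_four hM4 hu hpell hm
    exact hε.ne_sq _ (huv.trans (Ksqrt.coe_half_add_mul_sqrt_sq hab).symm)

/-- For `M` odd squarefree with `-1` a global norm from `K = ℚ(√M)`,
the fundamental unit has norm `N(ε_K) = -1` iff `m = 1` and `m' = 1`. -/
theorem stmt_0 (M : ℕ) (hM : 2 ≤ M) (hsf : Squarefree M)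
    [FiniteDimensional ℚ (Ksqrt M)]
    (hglob : ∃ x : Ksqrt M, Algebra.norm ℚ x = -1)
    (ε : (𝓞 (Ksqrt M))ˣ) (hε : IsFundamentalUnit M ε)
    (u v : ℤ) (hu : 0 < u) (hv : 0 < v) (hpar : u % 2 = v % 2)
    (huv : (((ε : 𝓞 (Ksqrt M)) : Ksqrt M) : ℝ) = (u + v * Real.sqrt M) / 2) (hModd : Odd M) :
    Algebra.norm ℚ ((ε : 𝓞 (Ksqrt M)) : Ksqrt M) = -1 ↔
      gcdm M u v = 1 ∧ gcdm' M u v = 1 :=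
  stmt_0_general M hM hsf hglob ε hε u v hu huv hModd
end

section
/- Let M ≥ 2 be a squarefree integer, K = ℚ(√M), and let ε be any unit of 𝒪_K. If m is a divisor of M with m > 2 such that the ideal 𝔪_m = ∏_{q prime, q ∣ m} 𝔮_q divides the principal ideal (ε + 1) of 𝒪_K, then N(ε) = 1. -/
/-! If `N(ε) = -1`, put `t = Tr ε`, so that `ε (t - ε) = N(ε) = -1`. The discriminant
`t² - 4 N(ε) = t² + 4` equals `(2s)² M` for `ε = r + s√M`, and squarefreeness of `M` forces
`2s ∈ ℤ`, so every prime `q ∣ M` divides `t² + 4`. As `m > 2` is squarefree it has an odd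
prime factor `q`. From `ε ≡ -1 mod 𝔮_q` and `ε (t - ε) = -1` we get `t ∈ 𝔮_q`, hence
`4 ∈ 𝔮_q`; together with `q ∈ 𝔮_q` this makes `𝔮_q` the unit ideal. -/

open NumberField

/-- Given the family `Q` of ramified primes (`Q q` is the prime ideal above `q`),
this is the squarefree product ideal `𝔪_d = ∏_{q prime, q ∣ d} 𝔮_q`. -/
noncomputable def mIdeal (M : ℕ) (Q : ℕ → Ideal (𝓞 (Ksqrt M))) (d : ℕ) :
    Ideal (𝓞 (Ksqrt M)) :=
  ∏ q ∈ d.primeFactors, Q q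

open Polynomial

theorem Nat.exists_odd_prime_dvd_of_squarefree {m : ℕ} (hm : Squarefree m) (hm2 : 2 < m) :
    ∃ q, q.Prime ∧ q ∣ m ∧ Odd q := by
  obtain ⟨k, rfl⟩ | h := m.eq_two_pow_or_exists_odd_prime_and_dvd
  · rcases Nat.eq_zero_or_pos k with rfl | hk
    · norm_num at hm2
    · rw [(Nat.squarefree_pow_iff Nat.prime_two.ne_one hk.ne').mp hm |>.2] at hm2
      norm_num at hm2
  · exact h

theorem Rat.den_eq_one_of_sq_mul_eq_intCast {M : ℕ} (hM : Squarefree M) {s : ℚ}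
    {D : ℤ} (h : s ^ 2 * M = D) : s.den = 1 := by
  have hden : (s.den : ℤ) ^ 2 ∣ s.num ^ 2 * M := by
    refine ⟨D, ?_⟩
    rw [← Rat.num_div_den s] at h
    have : (s.den : ℚ) ≠ 0 := by exact_mod_cast s.den_ne_zero
    field_simp at h
    exact_mod_cast h
  have hcop : (s.den ^ 2).Coprime (s.num.natAbs ^ 2) := (s.reduced.symm).pow 2 2
  have : s.den ^ 2 ∣ M := hcop.dvd_of_dvd_mul_left <| by
    simpa [Int.natAbs_mul, Int.natAbs_pow] using Int.natAbs_dvd_natAbs.mpr hden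
  exact Nat.isUnit_iff.mp (hM _ (by rwa [← sq]))

theorem Ideal.mem_of_mul_sub_eq_neg_one {R : Type*} [CommRing R] {I : Ideal R} {x t : R}
    (hx : x + 1 ∈ I) (h : x * (t - x) = -1) : t ∈ I := by
  have : t = -((t - x) * (x - 1)) * (x + 1) := by linear_combination x * h
  exact this ▸ I.mul_mem_left _ hx

theorem irrational_sqrt_natCast_of_squarefree {M : ℕ} (hM : 2 ≤ M) (hsf : Squarefree M) :
    Irrational √M := by
  rw [irrational_sqrt_natCast_iff]
  rintro ⟨k, rfl⟩
  have := Nat.isUnit_iff.mp (hsf k dvd_rfl)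
  subst this
  norm_num at hM

theorem isIntegral_sqrt_natCast (M : ℕ) : IsIntegral ℚ √M :=
  ⟨X ^ 2 - C (M : ℚ), monic_X_pow_sub_C _ two_ne_zero, by simp⟩

theorem natDegree_minpoly_sqrt_natCast {M : ℕ} (hM : 2 ≤ M) (hsf : Squarefree M) :
    (minpoly ℚ √M).natDegree = 2 := by
  have hle : (minpoly ℚ √M).natDegree ≤ 2 := by
    have := natDegree_le_of_dvd (minpoly.dvd ℚ (√M : ℝ) (p := X ^ 2 - C (M : ℚ)) (by simp))
      (X_pow_sub_C_ne_zero two_pos _)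
    rwa [natDegree_X_pow_sub_C] at this
  have hge : 2 ≤ (minpoly ℚ √M).natDegree := by
    rw [minpoly.two_le_natDegree_iff (isIntegral_sqrt_natCast M)]
    exact fun ⟨r, hr⟩ => irrational_sqrt_natCast_of_squarefree hM hsf ⟨r, hr⟩
  omega

namespace Ksqrt

variable {M : ℕ}

variable (M) in
noncomputable def sqrtM : Ksqrt M := IntermediateField.AdjoinSimple.gen ℚ √M

variable (M) in
theorem sqrtM_sq : sqrtM M ^ 2 = M :=
  Subtype.ext <| by push_cast; simp [sqrtM]

noncomputable def basisOneSqrt (hM : 2 ≤ M) (hsf : Squarefree M) :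
    Module.Basis (Fin 2) ℚ (Ksqrt M) :=
  (IntermediateField.adjoin.powerBasis (isIntegral_sqrt_natCast M)).basis.reindex
    (finCongr ((IntermediateField.adjoin.powerBasis_dim _).trans
      (natDegree_minpoly_sqrt_natCast hM hsf)))

theorem basisOneSqrt_apply (hM : 2 ≤ M) (hsf : Squarefree M) (i : Fin 2) :
    basisOneSqrt hM hsf i = sqrtM M ^ (i : ℕ) := by
  erw [basisOneSqrt, Module.Basis.reindex_apply, PowerBasis.basis_eq_pow]
  rfl

theorem leftMulMatrix_add_mul_sqrtM (hM : 2 ≤ M) (hsf : Squarefree M) (r s : ℚ) :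
    Algebra.leftMulMatrix (basisOneSqrt hM hsf) ((r : Ksqrt M) + s * sqrtM M) =
      !![r, M * s; s, r] := by
  set b := basisOneSqrt hM hsf
  have hb0 : ((r : Ksqrt M) + s * sqrtM M) * b 0 = r • b 0 + s • b 1 := by
    simp [b, basisOneSqrt_apply, Rat.smul_def]
  have hb1 : ((r : Ksqrt M) + s * sqrtM M) * b 1 = (M * s) • b 0 + r • b 1 := by
    simp [b, basisOneSqrt_apply, Rat.smul_def]
    linear_combination (s : Ksqrt M) * sqrtM_sq M
  ext i j
  rw [Algebra.leftMulMatrix_eq_repr_mul]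
  fin_cases j <;> fin_cases i <;> simp [hb0, hb1]

theorem trace_add_mul_sqrtM (hM : 2 ≤ M) (hsf : Squarefree M) (r s : ℚ) :
    Algebra.trace ℚ (Ksqrt M) ((r : Ksqrt M) + s * sqrtM M) = 2 * r := by
  rw [Algebra.trace_eq_matrix_trace (basisOneSqrt hM hsf), leftMulMatrix_add_mul_sqrtM,
    Matrix.trace_fin_two_of]
  ring

theorem norm_add_mul_sqrtM (hM : 2 ≤ M) (hsf : Squarefree M) (r s : ℚ) :
    Algebra.norm ℚ ((r : Ksqrt M) + s * sqrtM M) = r ^ 2 - M * s ^ 2 := by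
  rw [Algebra.norm_eq_matrix_det (basisOneSqrt hM hsf), leftMulMatrix_add_mul_sqrtM,
    Matrix.det_fin_two_of]
  ring

theorem exists_eq_add_mul_sqrtM (hM : 2 ≤ M) (hsf : Squarefree M) (x : Ksqrt M) :
    ∃ r s : ℚ, x = r + s * sqrtM M := by
  refine ⟨(basisOneSqrt hM hsf).repr x 0, (basisOneSqrt hM hsf).repr x 1, ?_⟩
  conv_lhs => rw [← (basisOneSqrt hM hsf).sum_repr x]
  simp [Fin.sum_univ_two, basisOneSqrt_apply, Rat.smul_def]

variable [NumberField (Ksqrt M)]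

theorem mul_trace_sub_self (hM : 2 ≤ M) (hsf : Squarefree M) (x : 𝓞 (Ksqrt M)) :
    x * (Algebra.trace ℤ (𝓞 (Ksqrt M)) x - x) = Algebra.norm ℤ x := by
  obtain ⟨r, s, hx⟩ := exists_eq_add_mul_sqrtM hM hsf x
  have ht : ((Algebra.trace ℤ (𝓞 (Ksqrt M)) x : ℤ) : Ksqrt M) = 2 * r := by
    rw [← Rat.cast_intCast, Algebra.coe_trace_int, hx, trace_add_mul_sqrtM hM hsf]
    push_cast
    ring
  have hn : ((Algebra.norm ℤ x : ℤ) : Ksqrt M) = r ^ 2 - M * s ^ 2 := by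
    rw [← Rat.cast_intCast, Algebra.coe_norm_int, hx, norm_add_mul_sqrtM hM hsf]
    push_cast
    ring
  apply RingOfIntegers.ext
  simp only [map_mul, map_sub, map_intCast]
  rw [ht, hn, ← RingOfIntegers.coe_eq_algebraMap, hx]
  linear_combination (-(s : Ksqrt M) ^ 2) * sqrtM_sq M

theorem dvd_trace_sq_sub_four_mul_norm (hM : 2 ≤ M) (hsf : Squarefree M) (x : 𝓞 (Ksqrt M)) :
    (M : ℤ) ∣ Algebra.trace ℤ (𝓞 (Ksqrt M)) x ^ 2 - 4 * Algebra.norm ℤ x := by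
  obtain ⟨r, s, hx⟩ := exists_eq_add_mul_sqrtM hM hsf x
  have hdisc : (2 * s) ^ 2 * M =
      ((Algebra.trace ℤ (𝓞 (Ksqrt M)) x ^ 2 - 4 * Algebra.norm ℤ x : ℤ) : ℚ) := by
    push_cast
    rw [Algebra.coe_trace_int, Algebra.coe_norm_int, hx, trace_add_mul_sqrtM hM hsf,
      norm_add_mul_sqrtM hM hsf]
    ring
  have hs := Rat.coe_int_num_of_den_eq_one (Rat.den_eq_one_of_sq_mul_eq_intCast hsf hdisc)
  refine ⟨(2 * s).num ^ 2, ?_⟩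
  rw [← hs] at hdisc
  exact_mod_cast hdisc.symm.trans (mul_comm _ _)

end Ksqrt

/-- For `M ≥ 2` squarefree, `K = ℚ(√M)`, and any unit `ε` of `𝒪_K`: if a divisor
`m > 2` of `M` is such that `𝔪_m = ∏_(q ∣ m) 𝔮_q` divides the ideal `(ε + 1)`,
then `N(ε) = 1`. -/
theorem stmt_13 (M : ℕ) (hM : 2 ≤ M) (hsf : Squarefree M)
    [NumberField (Ksqrt M)]
    (ε : (𝓞 (Ksqrt M))ˣ)
    (Q : ℕ → Ideal (𝓞 (Ksqrt M)))
    (hQ : ∀ q : ℕ, q.Prime → q ∣ M → (Q q).IsPrime ∧ (q : 𝓞 (Ksqrt M)) ∈ Q q)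
    (m : ℕ) (hmdvd : m ∣ M) (hm2 : 2 < m)
    (hdvd : mIdeal M Q m ∣ Ideal.span {(ε : 𝓞 (Ksqrt M)) + 1}) :
    Algebra.norm ℚ ((ε : 𝓞 (Ksqrt M)) : Ksqrt M) = 1 := by
  obtain ⟨q, hq, hqm, hq_odd⟩ :=
    Nat.exists_odd_prime_dvd_of_squarefree (hsf.squarefree_of_dvd hmdvd) hm2
  obtain ⟨hQq, hqQ⟩ := hQ q hq (hqm.trans hmdvd)
  have hε : (ε : 𝓞 (Ksqrt M)) + 1 ∈ Q q :=
    Ideal.le_of_dvd ((Finset.dvd_prod_of_mem Q (Nat.mem_primeFactors.mpr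
      ⟨hq, hqm, by omega⟩)).trans hdvd) (Ideal.mem_span_singleton_self _)
  rcases abs_eq (zero_le_one' ℚ) |>.mp (NumberField.Units.norm (Ksqrt M) ε) with h | h
  · exact h
  exfalso
  set t := Algebra.trace ℤ (𝓞 (Ksqrt M)) ε
  have hN : Algebra.norm ℤ (ε : 𝓞 (Ksqrt M)) = -1 := by
    exact_mod_cast (Algebra.coe_norm_int (ε : 𝓞 (Ksqrt M))).trans h
  have ht : (t : 𝓞 (Ksqrt M)) ∈ Q q :=
    Ideal.mem_of_mul_sub_eq_neg_one hε (by rw [Ksqrt.mul_trace_sub_self hM hsf, hN]; simp)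
  have hdisc : (q : ℤ) ∣ t ^ 2 + 4 := by
    simpa [hN] using (Int.natCast_dvd_natCast.mpr (hqm.trans hmdvd)).trans
      (Ksqrt.dvd_trace_sq_sub_four_mul_norm hM hsf (ε : 𝓞 (Ksqrt M)))
  have hdiscQ : ((t ^ 2 + 4 : ℤ) : 𝓞 (Ksqrt M)) ∈ Q q :=
    (Q q).mem_of_dvd (Int.cast_dvd_cast _ _ hdisc) (by exact_mod_cast hqQ)
  have h4 : ((4 : ℕ) : 𝓞 (Ksqrt M)) ∈ Q q := by
    simpa using (Q q).sub_mem hdiscQ ((Q q).pow_mem_of_mem ht 2 two_pos)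
  have hcop : Nat.Coprime 4 q := by
    simpa using Nat.Coprime.pow_left 2 (Nat.coprime_two_left.mpr hq_odd)
  exact hQq.notMem_of_isCoprime_of_mem hcop.cast h4 hqQ
end

section
/- Let M ≥ 2 be a squarefree integer, K = ℚ(√M), and σ the nontrivial automorphism of K. If β ∈ K^× satisfies N(β) = −1, then there exists a nonzero fractional ideal 𝔟 of 𝒪_K such that the principal fractional ideal generated by β equals 𝔟 · σ(𝔟)^{−1}. -/
open NumberField

open scoped nonZeroDivisors

/-!
As `[K : ℚ] ≤ 2` and `σ ≠ 1`, `K/ℚ` is Galois with group `{1, σ}`, so `N(β) = β · σβ = -1`.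
Take `𝔟 = (1, β)`; then `σ𝔟 = (1, σβ)` and `β · σ𝔟 = (β, β · σβ) = (β, -1) = 𝔟`.
-/

open IntermediateField in
theorem IntermediateField.finrank_adjoin_le_two_of_sq_eq {F L : Type*} [Field F] [Field L]
    [Algebra F L] {x : L} {a : F} (hx : x ^ 2 = algebraMap F L a) :
    Module.finrank F F⟮x⟯ ≤ 2 := by
  have hmonic := Polynomial.monic_X_pow_sub_C a two_ne_zero
  have hroot : Polynomial.aeval x (Polynomial.X ^ 2 - Polynomial.C a) = 0 := by simp [hx]
  rw [adjoin.finrank ⟨_, hmonic, hroot⟩, ← Polynomial.natDegree_X_pow_sub_C (n := 2) (r := a)]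
  exact Polynomial.natDegree_le_natDegree (minpoly.degree_le_of_ne_zero F x hmonic.ne_zero hroot)

theorem finrank_Ksqrt_le_two (M : ℕ) : Module.finrank ℚ (Ksqrt M) ≤ 2 :=
  IntermediateField.finrank_adjoin_le_two_of_sq_eq (a := (M : ℚ)) (by simp)

section QuadraticAut

variable {F L : Type*} [Field F] [Field L] [Algebra F L] [FiniteDimensional F L]

theorem card_algEquiv_eq_two_of_ne_refl (hL : Module.finrank F L ≤ 2) {σ : L ≃ₐ[F] L}
    (hσ : σ ≠ AlgEquiv.refl) : Nat.card (L ≃ₐ[F] L) = 2 := by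
  have : 1 < Nat.card (L ≃ₐ[F] L) := Finite.one_lt_card_iff_nontrivial.mpr ⟨⟨σ, _, hσ⟩⟩
  have := Nat.card_eq_fintype_card (α := L ≃ₐ[F] L) ▸ AlgEquiv.card_le (F := F) (K := L)
  omega

theorem isGalois_of_finrank_le_two_of_ne_refl (hL : Module.finrank F L ≤ 2)
    {σ : L ≃ₐ[F] L} (hσ : σ ≠ AlgEquiv.refl) : IsGalois F L := by
  have hcard := card_algEquiv_eq_two_of_ne_refl hL hσ
  have := Nat.card_eq_fintype_card (α := L ≃ₐ[F] L) ▸ AlgEquiv.card_le (F := F) (K := L)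
  exact IsGalois.of_card_aut_eq_finrank F L (by omega)

theorem algebraMap_norm_eq_mul_of_finrank_le_two (hL : Module.finrank F L ≤ 2)
    {σ : L ≃ₐ[F] L} (hσ : σ ≠ AlgEquiv.refl) (x : L) :
    algebraMap F L (Algebra.norm F x) = x * σ x := by
  classical
  have := isGalois_of_finrank_le_two_of_ne_refl hL hσ
  have huniv : ({AlgEquiv.refl, σ} : Finset (L ≃ₐ[F] L)) = Finset.univ :=
    Finset.eq_univ_of_card _ <| by
      rw [Finset.card_pair hσ.symm, ← Nat.card_eq_fintype_card,
        card_algEquiv_eq_two_of_ne_refl hL hσ]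
  rw [Algebra.norm_eq_prod_automorphisms, ← huniv, Finset.prod_pair hσ.symm]
  rfl

end QuadraticAut

namespace FractionalIdeal

section

variable {R P : Type*} [CommRing R] {S : Submonoid R} [CommRing P] [Algebra R P]
  [IsLocalization S P]

theorem one_add_spanSingleton_ne_zero [Nontrivial P] (y : P) :
    (1 + spanSingleton S y : FractionalIdeal S P) ≠ 0 := by
  intro h
  have h1 : (1 : P) ∈ (1 + spanSingleton S y : FractionalIdeal S P) :=
    (mem_add _ _ _).mpr ⟨1, one_mem_one S, 0, zero_mem _, add_zero 1⟩
  rw [h, mem_zero_iff] at h1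
  exact one_ne_zero h1

theorem spanSingleton_neg (x : P) : spanSingleton S (-x) = spanSingleton S x :=
  coeToSubmodule_injective <| by
    simp only [coe_spanSingleton, ← Set.neg_singleton, Submodule.span_neg]

theorem spanSingleton_mul_one_add_spanSingleton {x y : P} (hxy : x * y = -1) :
    spanSingleton S x * (1 + spanSingleton S y) = 1 + spanSingleton S x := by
  rw [mul_add, mul_one, spanSingleton_mul_spanSingleton, hxy, spanSingleton_neg,
    spanSingleton_one, add_comm]

theorem mem_one_add_spanSingleton_iff {x y : P} :
    x ∈ (1 + spanSingleton S y : FractionalIdeal S P) ↔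
      ∃ a b : R, algebraMap R P a + algebraMap R P b * y = x := by
  simp only [mem_add, mem_one_iff, mem_spanSingleton, Algebra.smul_def]
  constructor
  · rintro ⟨_, ⟨a, rfl⟩, _, ⟨b, rfl⟩, rfl⟩
    exact ⟨a, b, rfl⟩
  · rintro ⟨a, b, rfl⟩
    exact ⟨_, ⟨a, rfl⟩, _, ⟨b, rfl⟩, rfl⟩

end

theorem map_mem_one_add_spanSingleton {K L : Type*} [Field K] [Field L] [NumberField K]
    [NumberField L] (e : K ≃+* L) {x y : K}
    (hx : x ∈ (1 + spanSingleton (𝓞 K)⁰ y : FractionalIdeal (𝓞 K)⁰ K)) :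
    e x ∈ (1 + spanSingleton (𝓞 L)⁰ (e y) : FractionalIdeal (𝓞 L)⁰ L) := by
  obtain ⟨a, b, rfl⟩ := mem_one_add_spanSingleton_iff.mp hx
  refine mem_one_add_spanSingleton_iff.mpr ⟨RingOfIntegers.mapRingEquiv e a,
    RingOfIntegers.mapRingEquiv e b, ?_⟩
  simp

end FractionalIdeal

theorem stmt_15_general (M : ℕ)
    [NumberField (Ksqrt M)]
    (σ : Ksqrt M ≃ₐ[ℚ] Ksqrt M) (hσ : σ ≠ AlgEquiv.refl)
    (β : Ksqrt M) (hβ : Algebra.norm ℚ β = -1) :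
    ∃ b bσ : FractionalIdeal (𝓞 (Ksqrt M))⁰ (Ksqrt M), b ≠ 0 ∧
      (∀ x : Ksqrt M, x ∈ bσ ↔ ∃ y ∈ b, x = σ y) ∧
      FractionalIdeal.spanSingleton (𝓞 (Ksqrt M))⁰ β = b * bσ⁻¹ := by
  have hβσβ : β * σ β = -1 := by
    rw [← algebraMap_norm_eq_mul_of_finrank_le_two (finrank_Ksqrt_le_two M) hσ, hβ, map_neg,
      map_one]
  refine ⟨1 + FractionalIdeal.spanSingleton _ β, 1 + FractionalIdeal.spanSingleton _ (σ β),
    FractionalIdeal.one_add_spanSingleton_ne_zero β, fun x => ⟨fun hx => ?_, ?_⟩, ?_⟩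
  · refine ⟨σ.symm x, ?_, (σ.apply_symm_apply x).symm⟩
    simpa using FractionalIdeal.map_mem_one_add_spanSingleton (σ.symm : Ksqrt M ≃+* Ksqrt M) hx
  · rintro ⟨y, hy, rfl⟩
    exact FractionalIdeal.map_mem_one_add_spanSingleton (σ : Ksqrt M ≃+* Ksqrt M) hy
  · rw [eq_mul_inv_iff_mul_eq₀ (FractionalIdeal.one_add_spanSingleton_ne_zero _)]
    exact FractionalIdeal.spanSingleton_mul_one_add_spanSingleton hβσβ

/-- For `M ≥ 2` squarefree, `K = ℚ(√M)` with nontrivial automorphism `σ`: if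
`β ∈ K^×` has `N(β) = -1`, then there is a nonzero fractional ideal `𝔟` with
`(β) = 𝔟 · σ(𝔟)⁻¹` (here `𝔟σ` is the image fractional ideal `σ(𝔟)`). -/
theorem stmt_15 (M : ℕ) (hM : 2 ≤ M) (hsf : Squarefree M)
    [NumberField (Ksqrt M)]
    (σ : Ksqrt M ≃ₐ[ℚ] Ksqrt M) (hσ : σ ≠ AlgEquiv.refl)
    (β : Ksqrt M) (hβ0 : β ≠ 0) (hβ : Algebra.norm ℚ β = -1) :
    ∃ b bσ : FractionalIdeal (𝓞 (Ksqrt M))⁰ (Ksqrt M), b ≠ 0 ∧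
      (∀ x : Ksqrt M, x ∈ bσ ↔ ∃ y ∈ b, x = σ y) ∧
      FractionalIdeal.spanSingleton (𝓞 (Ksqrt M))⁰ β = b * bσ⁻¹ :=
  stmt_15_general M σ hσ β hβ
end

section
/- Let M be an even squarefree integer, K = ℚ(√M), 𝔮₂ the unique prime ideal of 𝒪_K above 2, and L = K(√2) = ℚ(√2, √M) with ring of integers 𝒪_L. Then the extension of 𝔮₂ to 𝒪_L is the principal ideal generated by √2, i.e. 𝔮₂·𝒪_L = √2·𝒪_L. -/
open NumberField

/-- The biquadratic field `L = K(√2) = ℚ(√2, √M)`, realized inside `ℝ`. -/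
noncomputable def Lsqrt (M : ℕ) : IntermediateField ℚ ℝ :=
  IntermediateField.adjoin ℚ {Real.sqrt 2, Real.sqrt M}

open UniqueFactorizationMonoid in
lemma ideal_sq_injective {R : Type*} [CommRing R] [IsDedekindDomain R] {I J : Ideal R}
    (hI : I ≠ ⊥) (hJ : J ≠ ⊥) (h : I ^ 2 = J ^ 2) : I = J := by
  have h2 : (2 : ℕ) • normalizedFactors I = (2 : ℕ) • normalizedFactors J := by
    rw [← normalizedFactors_pow, ← normalizedFactors_pow, h]
  classical
  have h3 : normalizedFactors I = normalizedFactors J := by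
    ext x
    have := congrArg (Multiset.count x) h2
    simpa [Multiset.count_nsmul] using this
  exact associated_iff_eq.mp
    ((associated_iff_normalizedFactors_eq_normalizedFactors hI hJ).mpr h3)

set_option maxHeartbeats 1000000 in
/-- For `M` even squarefree, `K = ℚ(√M)`, `𝔮₂` the prime of `𝒪_K` above `2`, and
`L = K(√2) = ℚ(√2, √M)`: the extension of `𝔮₂` to `𝒪_L` is the principal ideal
generated by `√2`. Here `f : 𝒪_K →+* 𝒪_L` is the natural inclusion. -/
theorem stmt_16 (M : ℕ) (hM : 2 ≤ M) (hMeven : Even M) (hsf : Squarefree M)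
    [NumberField (Ksqrt M)] [NumberField (Lsqrt M)]
    (Q2 : Ideal (𝓞 (Ksqrt M))) (hQ2 : Q2.IsPrime ∧ (2 : 𝓞 (Ksqrt M)) ∈ Q2)
    (f : 𝓞 (Ksqrt M) →+* 𝓞 (Lsqrt M))
    (hf : ∀ x : 𝓞 (Ksqrt M), ((f x : Lsqrt M) : ℝ) = ((x : Ksqrt M) : ℝ))
    (s2 : 𝓞 (Lsqrt M)) (hs2 : ((s2 : Lsqrt M) : ℝ) = Real.sqrt 2) :
    Ideal.map f Q2 = Ideal.span {s2} := by
  have hM0 : (0 : ℝ) ≤ (M : ℝ) := by positivity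
  -- the element √M of K
  have hmemK : Real.sqrt M ∈ Ksqrt M :=
    IntermediateField.subset_adjoin ℚ _ (Set.mem_singleton _)
  set xK : Ksqrt M := ⟨Real.sqrt M, hmemK⟩ with hxK
  have hxK2 : xK ^ 2 = (M : Ksqrt M) := by
    have : ((xK ^ 2 : Ksqrt M) : ℝ) = ((M : Ksqrt M) : ℝ) := by
      push_cast
      exact Real.sq_sqrt hM0
    exact Subtype.coe_injective this
  have hxint : IsIntegral ℤ xK := by
    refine ⟨Polynomial.X ^ 2 - Polynomial.C (M : ℤ),
      Polynomial.monic_X_pow_sub_C _ two_ne_zero, ?_⟩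
    simp [Polynomial.eval₂_sub, hxK2, sub_eq_zero]
  set sM : 𝓞 (Ksqrt M) := ⟨xK, hxint⟩ with hsM
  -- M = 2 * m with m odd
  obtain ⟨m, hm⟩ := hMeven
  have hm2 : M = 2 * m := by omega
  have hmodd : ¬ (2 ∣ m) := by
    intro ⟨k, hk⟩
    have h4 : (2 * 2) ∣ M := ⟨k, by omega⟩
    exact (by norm_num : ¬ IsUnit (2 : ℕ)) (hsf 2 h4)
  have hsM_sq : sM * sM = 2 * (m : 𝓞 (Ksqrt M)) := by
    apply NumberField.RingOfIntegers.ext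
    have h1 : ((sM * sM : 𝓞 (Ksqrt M)) : Ksqrt M) = xK * xK := by
      push_cast
      rfl
    rw [h1, ← pow_two, hxK2, hm2]
    push_cast [map_ofNat]
    ring
  have hsM_in : sM ∈ Q2 := by
    have hmm : sM * sM ∈ Q2 := by
      rw [hsM_sq]
      exact Ideal.mul_mem_right _ _ hQ2.2
    rcases hQ2.1.mem_or_mem hmm with h | h <;> exact h
  -- the ideal J = (2, √M)
  set J : Ideal (𝓞 (Ksqrt M)) := Ideal.span {(2 : 𝓞 (Ksqrt M)), sM} with hJ
  have h2J : (2 : 𝓞 (Ksqrt M)) ∈ J := Ideal.subset_span (by simp)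
  have hsMJ : sM ∈ J := Ideal.subset_span (by simp)
  have hJ_le : J ≤ Q2 := by
    rw [hJ, Ideal.span_le]
    rintro x (rfl | rfl)
    · exact hQ2.2
    · exact hsM_in
  -- J ^ 2 = (2)
  have hJsq : J ^ 2 = Ideal.span {(2 : 𝓞 (Ksqrt M))} := by
    rw [pow_two]
    apply le_antisymm
    · refine Ideal.mul_le.mpr ?_
      intro r hr s hs
      obtain ⟨a, b, hab⟩ := Ideal.mem_span_pair.mp hr
      obtain ⟨c, d, hcd⟩ := Ideal.mem_span_pair.mp hs
      rw [Ideal.mem_span_singleton]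
      refine ⟨2 * (a * c) + a * d * sM + b * c * sM + b * d * (m : 𝓞 (Ksqrt M)), ?_⟩
      rw [← hab, ← hcd]
      linear_combination (b * d) * hsM_sq
    · rw [Ideal.span_singleton_le_iff_mem]
      have h4 : (4 : 𝓞 (Ksqrt M)) ∈ J * J := by
        have := Ideal.mul_mem_mul h2J h2J
        norm_num at this
        exact this
      have hMm : (2 : 𝓞 (Ksqrt M)) * (m : 𝓞 (Ksqrt M)) ∈ J * J := by
        rw [← hsM_sq]
        exact Ideal.mul_mem_mul hsMJ hsMJ
      have hcopn : Nat.Coprime 2 m :=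
        (Nat.Prime.coprime_iff_not_dvd Nat.prime_two).mpr hmodd
      have hcop : IsCoprime (2 : ℤ) (m : ℤ) := by
        exact_mod_cast Nat.isCoprime_iff_coprime.mpr hcopn
      obtain ⟨u, v, huv⟩ := hcop
      have h2eq : (u : 𝓞 (Ksqrt M)) * 4 + (v : 𝓞 (Ksqrt M)) * (2 * (m : 𝓞 (Ksqrt M)))
          = 2 := by
        have h := congrArg (fun z : ℤ => (z : 𝓞 (Ksqrt M))) huv
        push_cast at h
        linear_combination 2 * h
      rw [← h2eq]
      exact Ideal.add_mem _ (Ideal.mul_mem_left _ _ h4) (Ideal.mul_mem_left _ _ hMm)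
  -- [K : ℚ] = 2
  have hirr : Irrational (Real.sqrt M) := by
    rw [irrational_sqrt_natCast_iff]
    rintro ⟨k, hk⟩
    have hk1 : IsUnit k := hsf k (by rw [hk])
    rw [Nat.isUnit_iff] at hk1
    rw [hk1] at hk
    omega
  have hint : IsIntegral ℚ (Real.sqrt M : ℝ) := by
    refine ⟨Polynomial.X ^ 2 - Polynomial.C (M : ℚ),
      Polynomial.monic_X_pow_sub_C _ two_ne_zero, ?_⟩
    simp [Polynomial.eval₂_sub, sub_eq_zero, Real.sq_sqrt hM0]
  have hdeg : (minpoly ℚ (Real.sqrt M : ℝ)).natDegree = 2 := by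
    have hle : (minpoly ℚ (Real.sqrt M : ℝ)).natDegree ≤ 2 := by
      have hdvd : minpoly ℚ (Real.sqrt M : ℝ) ∣
          (Polynomial.X ^ 2 - Polynomial.C (M : ℚ)) := by
        apply minpoly.dvd
        simp [Polynomial.aeval_def, Polynomial.eval₂_sub, sub_eq_zero, Real.sq_sqrt hM0]
      have hne : (Polynomial.X ^ 2 - Polynomial.C (M : ℚ)) ≠ 0 :=
        (Polynomial.monic_X_pow_sub_C _ two_ne_zero).ne_zero
      have hh := Polynomial.natDegree_le_of_dvd hdvd hne
      rwa [Polynomial.natDegree_X_pow_sub_C] at hh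
    have hge : 2 ≤ (minpoly ℚ (Real.sqrt M : ℝ)).natDegree := by
      rw [minpoly.two_le_natDegree_iff hint]
      rintro ⟨q, hq⟩
      exact hirr ⟨q, by simpa using hq⟩
    omega
  have hrankK : Module.finrank ℚ (Ksqrt M) = 2 := by
    rw [show (Ksqrt M) = IntermediateField.adjoin ℚ {Real.sqrt M} from rfl]
    rw [IntermediateField.adjoin.finrank hint]
    exact hdeg
  have hrankO : Module.finrank ℤ (𝓞 (Ksqrt M)) = 2 := by
    rw [NumberField.RingOfIntegers.rank]
    exact hrankK
  -- absNorm of (2) is 4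
  have habs2 : Ideal.absNorm (Ideal.span {(2 : 𝓞 (Ksqrt M))}) = 4 := by
    rw [Ideal.absNorm_span_singleton]
    have h2alg : (2 : 𝓞 (Ksqrt M)) = algebraMap ℤ (𝓞 (Ksqrt M)) 2 := by
      simp
    rw [h2alg, Algebra.norm_algebraMap_of_basis (Module.Free.chooseBasis ℤ (𝓞 (Ksqrt M))),
      ← Module.finrank_eq_card_chooseBasisIndex, hrankO]
    norm_num
  have hJnorm : Ideal.absNorm J = 2 := by
    have hsq : (Ideal.absNorm J) ^ 2 = 4 := by
      rw [← map_pow, hJsq, habs2]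
    nlinarith [hsq]
  have hJprime : J.IsPrime :=
    Ideal.isPrime_of_irreducible_absNorm (hJnorm ▸ Nat.prime_two)
  have hJbot : J ≠ ⊥ := by
    intro h
    rw [h] at hJnorm
    simp at hJnorm
  have hJmax : J.IsMaximal := hJprime.isMaximal hJbot
  have hQ2J : J = Q2 := hJmax.eq_of_le hQ2.1.ne_top hJ_le
  have hQ2sq : Q2 ^ 2 = Ideal.span {(2 : 𝓞 (Ksqrt M))} := by rw [← hQ2J]; exact hJsq
  -- the L side
  have hs2sq : s2 ^ 2 = 2 := by
    apply NumberField.RingOfIntegers.ext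
    apply Subtype.coe_injective
    push_cast
    rw [hs2, Real.sq_sqrt (by norm_num : (0:ℝ) ≤ 2)]
    have h1 : ((2 : 𝓞 (Lsqrt M)) : Lsqrt M) = 2 := map_ofNat _ 2
    rw [h1]
    have h2 : ((2 : Lsqrt M) : ℝ) = 2 := by
      have : (2 : Lsqrt M) = 1 + 1 := by norm_num
      rw [this]
      push_cast
      norm_num
    rw [h2]
  have hs2ne : s2 ≠ 0 := by
    intro h
    rw [h] at hs2
    have : (0 : ℝ) = Real.sqrt 2 := by simpa using hs2
    have h2 : (0 : ℝ) < Real.sqrt 2 := Real.sqrt_pos.mpr (by norm_num)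
    linarith
  have hmain : (Ideal.map f Q2) ^ 2 = (Ideal.span {s2}) ^ 2 := by
    rw [← Ideal.map_pow, hQ2sq, Ideal.map_span, Set.image_singleton, map_ofNat,
      Ideal.span_singleton_pow, hs2sq]
  apply ideal_sq_injective ?_ ?_ hmain
  · intro h
    have hmem : f 2 ∈ Ideal.map f Q2 := Ideal.mem_map_of_mem f hQ2.2
    rw [h, Ideal.mem_bot, map_ofNat] at hmem
    exact two_ne_zero hmem
  · rw [Ne, Ideal.span_singleton_eq_bot]
    exact hs2ne
end

section
/- Let M ≥ 2 be an even squarefree integer such that −1 is a global norm from K = ℚ(√M), and write the fundamental unit as ε_K = a + b√M with a, b positive integers. Then N(ε_K) = −1 if and only if b is odd. -/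
open NumberField

/-!
The unit `ε = a + b√M` has norm `a² - M b² = ±1`. As `M ≡ 2 mod 4`, this forces `a` to be odd,
so `a² ≡ 1 mod 8`. If `b` is even then `M b² ≡ 0 mod 8` and the norm is `1 mod 8`; if `b` is odd
then `b² ≡ 1 mod 8` and the norm is `1 - M ≡ 3` or `7 mod 8`. Hence the norm is `-1` iff `b` is odd.
-/

section

open Polynomial IntermediateField

theorem minpoly_eq_of_sq_eq_add_mul {K L : Type*} [Field K] [Field L] [Algebra K L] {x : L}
    (hx : x ∉ (algebraMap K L).range) {u v : K}
    (hsq : x ^ 2 = algebraMap K L u + algebraMap K L v * x) :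
    minpoly K x = X ^ 2 - C v * X - C u := by
  have hmonic : (X ^ 2 - C v * X - C u).Monic := by monicity!
  have hdeg : (X ^ 2 - C v * X - C u).natDegree = 2 := by compute_degree!
  have hroot : aeval x (X ^ 2 - C v * X - C u) = 0 := by
    simp only [map_sub, map_mul, map_pow, aeval_X, aeval_C]
    linear_combination hsq
  have hint : IsIntegral K x := ⟨_, hmonic, hroot⟩
  refine (eq_of_monic_of_dvd_of_natDegree_le (minpoly.monic hint) hmonic
    (minpoly.dvd K x hroot) ?_).symm
  rw [hdeg]
  exact (minpoly.two_le_natDegree_iff hint).mpr hx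

theorem Algebra.norm_eq_coeff_zero_minpoly_of_natDegree_eq_finrank {K L : Type*} [Field K]
    [Field L] [Algebra K L] [FiniteDimensional K L] {x : L}
    (h : (minpoly K x).natDegree = Module.finrank K L) :
    Algebra.norm K x = (-1) ^ Module.finrank K L * (minpoly K x).coeff 0 := by
  have hx : IsIntegral K x := .of_finite K x
  have hadjoin : Module.finrank K⟮x⟯ L = 1 := by
    have := Module.finrank_mul_finrank K K⟮x⟯ L
    rw [adjoin.finrank hx, h] at this
    exact (Nat.mul_eq_left Module.finrank_pos.ne').mp this
  have hgen : norm K (AdjoinSimple.gen K x) =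
      (-1) ^ (minpoly K x).natDegree * (minpoly K (AdjoinSimple.gen K x)).coeff 0 :=
    PowerBasis.norm_gen_eq_coeff_zero_minpoly (IntermediateField.adjoin.powerBasis hx)
  rw [Algebra.norm_eq_norm_adjoin, hadjoin, pow_one, hgen, minpoly_gen, h]

theorem Ksqrt.finrank_eq_two {M : ℕ} (hM : ¬ IsSquare M) : Module.finrank ℚ (Ksqrt M) = 2 := by
  have hmin : minpoly ℚ √(M : ℝ) = X ^ 2 - C 0 * X - C (M : ℚ) :=
    minpoly_eq_of_sq_eq_add_mul (irrational_sqrt_natCast_iff.mpr hM) (by simp)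
  have hint : IsIntegral ℚ √(M : ℝ) :=
    .of_pow two_pos (by simpa using isIntegral_algebraMap (x := (M : ℚ)))
  rw [Ksqrt, adjoin.finrank hint, hmin]
  compute_degree!

theorem Ksqrt.norm_eq_sq_sub_mul_sq {M : ℕ} (hM : ¬ IsSquare M) (x : Ksqrt M) (a b : ℚ)
    (hx : (x : ℝ) = a + b * √(M : ℝ)) : Algebra.norm ℚ x = a ^ 2 - M * b ^ 2 := by
  have hfin : Module.finrank ℚ (Ksqrt M) = 2 := Ksqrt.finrank_eq_two hM
  have : FiniteDimensional ℚ (Ksqrt M) := .of_finrank_eq_succ hfin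
  have hinj : Function.Injective (algebraMap (Ksqrt M) ℝ) := (algebraMap (Ksqrt M) ℝ).injective
  rcases eq_or_ne b 0 with rfl | hb
  · have : x = algebraMap ℚ (Ksqrt M) a := hinj (by simpa using hx)
    rw [this, Algebra.norm_algebraMap, hfin]
    ring
  · have hirr : Irrational (x : ℝ) := by
      rw [hx]
      exact ((irrational_sqrt_natCast_iff.mpr hM).ratCast_mul hb).ratCast_add a
    have hmin : minpoly ℚ x = X ^ 2 - C (2 * a) * X - C (M * b ^ 2 - a ^ 2) := by
      rw [← minpoly.algebraMap_eq hinj]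
      refine minpoly_eq_of_sq_eq_add_mul hirr ?_
      simp only [eq_ratCast, hx]
      push_cast
      linear_combination (b : ℝ) ^ 2 * Real.sq_sqrt (Nat.cast_nonneg (α := ℝ) M)
    have hdeg : (minpoly ℚ x).natDegree = Module.finrank ℚ (Ksqrt M) := by
      rw [hmin, hfin]
      compute_degree!
    rw [Algebra.norm_eq_coeff_zero_minpoly_of_natDegree_eq_finrank hdeg, hmin, hfin]
    simp only [coeff_sub, coeff_C_mul, coeff_X_pow, coeff_X_zero, coeff_C_zero]
    norm_num

end

theorem Int.sq_sub_mul_sq_eq_neg_one_iff_odd {a b m : ℤ} (hm : m % 4 = 2)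
    (h : a ^ 2 - m * b ^ 2 = 1 ∨ a ^ 2 - m * b ^ 2 = -1) :
    a ^ 2 - m * b ^ 2 = -1 ↔ Odd b := by
  obtain ⟨v, rfl⟩ : ∃ v, m = 4 * v + 2 := ⟨m / 4, by omega⟩
  obtain ⟨k, rfl | rfl⟩ := Int.even_or_odd' a <;> obtain ⟨l, rfl | rfl⟩ := Int.even_or_odd' b
  -- `k (k + 1)` is even, so odd squares are `1 mod 8`
  all_goals
    obtain ⟨j, hj⟩ := Int.even_mul_succ_self k
    obtain ⟨i, hi⟩ := Int.even_mul_succ_self l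
    simp only [Int.odd_iff]
    ring_nf at h hj hi ⊢
    omega

theorem stmt_18_general (M : ℕ) (hMeven : Even M) (hsf : Squarefree M)
    [NumberField (Ksqrt M)]
    (ε : (𝓞 (Ksqrt M))ˣ)
    (a b : ℕ)
    (hab : (((ε : 𝓞 (Ksqrt M)) : Ksqrt M) : ℝ) = a + b * Real.sqrt M) :
    Algebra.norm ℚ ((ε : 𝓞 (Ksqrt M)) : Ksqrt M) = -1 ↔ Odd b := by
  have hMsq : ¬ IsSquare M := by
    rintro ⟨r, rfl⟩
    obtain rfl : r = 1 := Nat.isUnit_iff.mp (hsf r dvd_rfl)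
    exact Nat.not_even_one hMeven
  have hM4 : (M : ℤ) % 4 = 2 := by
    obtain ⟨k, rfl⟩ := hMeven
    have : ¬ 2 * 2 ∣ k + k := fun h ↦ by simpa using hsf 2 h
    omega
  have hnorm :
      Algebra.norm ℚ ((ε : 𝓞 (Ksqrt M)) : Ksqrt M) = ((a ^ 2 - M * b ^ 2 : ℤ) : ℚ) := by
    rw [Ksqrt.norm_eq_sq_sub_mul_sq hMsq _ a b (by exact_mod_cast hab)]
    push_cast
    ring
  have hunit : (a ^ 2 - M * b ^ 2 : ℤ) = 1 ∨ (a ^ 2 - M * b ^ 2 : ℤ) = -1 := by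
    have := NumberField.isUnit_iff_norm.mp ε.isUnit
    rw [RingOfIntegers.coe_norm, hnorm] at this
    exact abs_eq_abs.mp (by exact_mod_cast this)
  rw [hnorm, ← Int.odd_coe_nat, ← Int.sq_sub_mul_sq_eq_neg_one_iff_odd hM4 hunit]
  norm_cast

/-- For `M ≥ 2` even squarefree with `-1` a global norm from `K = ℚ(√M)`, writing the
fundamental unit as `ε_K = a + b√M` with `a, b` positive integers, one has
`N(ε_K) = -1` iff `b` is odd. -/
theorem stmt_18 (M : ℕ) (hM : 2 ≤ M) (hMeven : Even M) (hsf : Squarefree M)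
    [NumberField (Ksqrt M)]
    (hglob : ∃ x : Ksqrt M, Algebra.norm ℚ x = -1)
    (ε : (𝓞 (Ksqrt M))ˣ) (hε : IsFundamentalUnit M ε)
    (a b : ℕ) (ha : 0 < a) (hb : 0 < b)
    (hab : (((ε : 𝓞 (Ksqrt M)) : Ksqrt M) : ℝ) = a + b * Real.sqrt M) :
    Algebra.norm ℚ ((ε : 𝓞 (Ksqrt M)) : Ksqrt M) = -1 ↔ Odd b :=
  stmt_18_general M hMeven hsf ε a b hab
end
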